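/- arXiv:1105.6367 — 3 statements merged into one kernel-verified Lean document; each statement's English description precedes it below -/
import Mathlib

section
/- Let A be symmetric positive definite with eigenvalues λ₁ ≤ ... ≤ λ_N and set λ = √(λ₁ λ_N). Then the condition number of (A + λ I)^{-1} A equals √(κ(A)), i.e., it equals the condition number of A + λ I. -/
/-!
`A + λI`, `(A + λI)⁻¹ A` and their inverses are real functions of `A` in its spectral calculus, so
each spectral norm is the largest value of the corresponding positive function on the spectrum,
attained at `λ₁` or `λ_N` by monotonicity. The two condition numbers become
`λ_N / (λ_N + λ) · (λ₁ + λ) / λ₁` and `(λ_N + λ) / (λ₁ + λ)`; writing `λ₁ = s²`, `λ_N = t²` and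
`λ = s t`, both collapse to `t / s = √(λ_N / λ₁)`.
-/

open Matrix
open scoped Matrix.Norms.L2Operator

theorem pi_norm_eq_of_isGreatest {ι E : Type*} [Fintype ι] [SeminormedAddCommGroup E]
    {v : ι → E} {M : ℝ} (h : IsGreatest (Set.range fun i => ‖v i‖) M) : ‖v‖ = M := by
  obtain ⟨⟨i, rfl⟩, hle⟩ := h
  exact le_antisymm ((pi_norm_le_iff_of_nonneg (norm_nonneg _)).mpr fun j => hle ⟨j, rfl⟩)
    (norm_le_pi_norm v i)

section RealMonotone

open Set

variable {c : ℝ}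

theorem antitoneOn_inv_add_const_Ioi (hc : 0 ≤ c) :
    AntitoneOn (fun x : ℝ => (x + c)⁻¹) (Ioi 0) := fun x hx _ _ hxy =>
  inv_anti₀ (add_pos_of_pos_of_nonneg hx hc) (by simpa using hxy)

theorem monotoneOn_div_add_const_Ioi (hc : 0 ≤ c) :
    MonotoneOn (fun x : ℝ => x / (x + c)) (Ioi 0) := fun x hx y hy hxy => by
  simp only [mem_Ioi] at hx hy
  simp only
  rw [div_le_div_iff₀ (by positivity) (by positivity)]
  nlinarith

theorem antitoneOn_add_const_div_Ioi (hc : 0 ≤ c) :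
    AntitoneOn (fun x : ℝ => (x + c) / x) (Ioi 0) := fun x hx y hy hxy => by
  simp only [mem_Ioi] at hx hy
  simp only
  rw [div_le_div_iff₀ hy hx]
  nlinarith

end RealMonotone

theorem Real.add_sqrt_mul_div_add_sqrt_mul {a b : ℝ} (ha : 0 < a) (hb : 0 < b) :
    (b + √(a * b)) / (a + √(a * b)) = √(b / a) := by
  obtain ⟨s, hs, rfl⟩ : ∃ s, 0 < s ∧ s ^ 2 = a := ⟨√a, by positivity, Real.sq_sqrt ha.le⟩
  obtain ⟨t, ht, rfl⟩ : ∃ t, 0 < t ∧ t ^ 2 = b := ⟨√b, by positivity, Real.sq_sqrt hb.le⟩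
  rw [← mul_pow, ← div_pow, Real.sqrt_sq (by positivity), Real.sqrt_sq (by positivity)]
  field_simp
  ring

theorem Real.div_add_sqrt_mul_mul_add_sqrt_mul_div {a b : ℝ} (ha : 0 < a) (hb : 0 < b) :
    b / (b + √(a * b)) * ((a + √(a * b)) / a) = √(b / a) := by
  rw [← Real.div_sqrt, ← Real.add_sqrt_mul_div_add_sqrt_mul ha hb]
  have : 0 < √(a * b) := by positivity
  field_simp
  ring

namespace Matrix

variable {n 𝕜 : Type*} [Fintype n] [DecidableEq n] [RCLike 𝕜]

/-- For singular `B` this is `0`, since then `B⁻¹ = 0`. -/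
noncomputable def l2Cond (B : Matrix n n 𝕜) : ℝ := ‖B‖ * ‖B⁻¹‖

namespace IsHermitian

variable {A : Matrix n n 𝕜}

theorem l2_opNorm_cfc (hA : A.IsHermitian) (f : ℝ → ℝ) : ‖cfc f A‖ = ‖f ∘ hA.eigenvalues‖ := by
  have hU := hA.eigenvectorUnitary.2
  rw [hA.cfc_eq, IsHermitian.cfc, Unitary.conjStarAlgAut_apply,
    CStarRing.norm_mul_mem_unitary _ (Unitary.star_mem hU),
    CStarRing.norm_mem_unitary_mul _ hU, l2_opNorm_diagonal]
  simp only [Pi.norm_def, Function.comp_apply]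
  congr 2 with i
  simp

theorem l2_opNorm_cfc_of_isGreatest (hA : A.IsHermitian) {f : ℝ → ℝ} {M : ℝ}
    (h : IsGreatest ((fun x => |f x|) '' spectrum ℝ A) M) : ‖cfc f A‖ = M := by
  rw [hA.l2_opNorm_cfc]
  refine pi_norm_eq_of_isGreatest ?_
  rwa [hA.spectrum_real_eq_range_eigenvalues, ← Set.range_comp] at h

theorem l2_opNorm_cfc_of_monotoneOn (hA : A.IsHermitian) {f : ℝ → ℝ} {M : ℝ}
    (hM : IsGreatest (spectrum ℝ A) M) (hf : MonotoneOn f (spectrum ℝ A))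
    (hf₀ : ∀ x ∈ spectrum ℝ A, 0 ≤ f x) : ‖cfc f A‖ = f M := by
  refine hA.l2_opNorm_cfc_of_isGreatest ?_
  rw [Set.image_congr fun x hx => abs_of_nonneg (hf₀ x hx)]
  exact hf.map_isGreatest hM

theorem l2_opNorm_cfc_of_antitoneOn (hA : A.IsHermitian) {f : ℝ → ℝ} {m : ℝ}
    (hm : IsLeast (spectrum ℝ A) m) (hf : AntitoneOn f (spectrum ℝ A))
    (hf₀ : ∀ x ∈ spectrum ℝ A, 0 ≤ f x) : ‖cfc f A‖ = f m := by
  refine hA.l2_opNorm_cfc_of_isGreatest ?_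
  rw [Set.image_congr fun x hx => abs_of_nonneg (hf₀ x hx)]
  exact hf.map_isLeast hm

theorem inv_cfc (hA : A.IsHermitian) {f : ℝ → ℝ} (hf : ∀ x ∈ spectrum ℝ A, f x ≠ 0) :
    (cfc f A)⁻¹ = cfc (fun x => (f x)⁻¹) A := by
  rw [nonsing_inv_eq_ringInverse, cfc_inv f A hf (A.finite_real_spectrum.continuousOn f)]

section Shifted

variable {c m M : ℝ}

theorem add_smul_one_eq_cfc (hA : A.IsHermitian) (c : ℝ) : A + c • 1 = cfc (· + c) A := by
  rw [cfc_add_const c (fun x => x) A, cfc_id' ℝ A, Algebra.algebraMap_eq_smul_one]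

theorem inv_add_smul_one_eq_cfc (hA : A.IsHermitian) (hpos : spectrum ℝ A ⊆ Set.Ioi 0)
    (hc : 0 ≤ c) : (A + c • 1)⁻¹ = cfc (fun x => (x + c)⁻¹) A := by
  rw [hA.add_smul_one_eq_cfc, hA.inv_cfc fun x hx => (add_pos_of_pos_of_nonneg (hpos hx) hc).ne']

theorem inv_add_smul_one_mul_eq_cfc (hA : A.IsHermitian) (hpos : spectrum ℝ A ⊆ Set.Ioi 0)
    (hc : 0 ≤ c) : (A + c • 1)⁻¹ * A = cfc (fun x => x / (x + c)) A := by
  have hcont (f : ℝ → ℝ) : ContinuousOn f (spectrum ℝ A) := A.finite_real_spectrum.continuousOn f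
  simp_rw [div_eq_inv_mul]
  rw [cfc_mul (fun x => (x + c)⁻¹) (fun x => x) A (hcont _) (hcont _), cfc_id' ℝ A,
    hA.inv_add_smul_one_eq_cfc hpos hc]

theorem inv_inv_add_smul_one_mul_eq_cfc (hA : A.IsHermitian) (hpos : spectrum ℝ A ⊆ Set.Ioi 0)
    (hc : 0 ≤ c) : ((A + c • 1)⁻¹ * A)⁻¹ = cfc (fun x => (x + c) / x) A := by
  have hdiv (x) (hx : x ∈ spectrum ℝ A) : x / (x + c) ≠ 0 :=
    (div_pos (hpos hx) (add_pos_of_pos_of_nonneg (hpos hx) hc)).ne'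
  simp_rw [hA.inv_add_smul_one_mul_eq_cfc hpos hc, hA.inv_cfc hdiv, inv_div]

theorem l2Cond_add_smul_one (hA : A.IsHermitian) (hm : IsLeast (spectrum ℝ A) m)
    (hM : IsGreatest (spectrum ℝ A) M) (hm₀ : 0 < m) (hc : 0 ≤ c) :
    l2Cond (A + c • 1) = (M + c) / (m + c) := by
  have hpos : spectrum ℝ A ⊆ Set.Ioi 0 := fun x hx => hm₀.trans_le (hm.2 hx)
  rw [l2Cond, hA.inv_add_smul_one_eq_cfc hpos hc, hA.add_smul_one_eq_cfc,
    hA.l2_opNorm_cfc_of_monotoneOn (f := (· + c)) hM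
      (fun _ _ _ _ hxy => (add_le_add_iff_right c).2 hxy)
      fun x hx => (add_pos_of_pos_of_nonneg (hpos hx) hc).le,
    hA.l2_opNorm_cfc_of_antitoneOn hm ((antitoneOn_inv_add_const_Ioi hc).mono hpos)
      fun x hx => (inv_pos.2 (add_pos_of_pos_of_nonneg (hpos hx) hc)).le,
    div_eq_mul_inv]

theorem l2Cond_inv_add_smul_one_mul (hA : A.IsHermitian) (hm : IsLeast (spectrum ℝ A) m)
    (hM : IsGreatest (spectrum ℝ A) M) (hm₀ : 0 < m) (hc : 0 ≤ c) :
    l2Cond ((A + c • 1)⁻¹ * A) = M / (M + c) * ((m + c) / m) := by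
  have hpos : spectrum ℝ A ⊆ Set.Ioi 0 := fun x hx => hm₀.trans_le (hm.2 hx)
  rw [l2Cond, hA.inv_inv_add_smul_one_mul_eq_cfc hpos hc, hA.inv_add_smul_one_mul_eq_cfc hpos hc,
    hA.l2_opNorm_cfc_of_monotoneOn hM ((monotoneOn_div_add_const_Ioi hc).mono hpos)
      fun x hx => (div_pos (hpos hx) (add_pos_of_pos_of_nonneg (hpos hx) hc)).le,
    hA.l2_opNorm_cfc_of_antitoneOn hm ((antitoneOn_add_const_div_Ioi hc).mono hpos)
      fun x hx => (div_pos (add_pos_of_pos_of_nonneg (hpos hx) hc) (hpos hx)).le]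

end Shifted

end IsHermitian

end Matrix

/-- For `A` SPD with extreme eigenvalues `λ₁ ≤ λ_N` and `λ = √(λ₁ λ_N)`,
the spectral condition number of `(A + λI)⁻¹ A` equals `√(κ(A))`, i.e. it equals the
condition number of `A + λI`. -/
theorem stmt3 {N : ℕ} (A : Matrix (Fin N) (Fin N) ℝ) (hA : A.IsHermitian)
    (lam1 lamN : ℝ)
    (hmin : IsLeast (Set.range hA.eigenvalues) lam1)
    (hmax : IsGreatest (Set.range hA.eigenvalues) lamN)
    (hpd : 0 < lam1) :
    ‖(A + Real.sqrt (lam1 * lamN) • (1 : Matrix (Fin N) (Fin N) ℝ))⁻¹ * A‖ *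
        ‖((A + Real.sqrt (lam1 * lamN) • (1 : Matrix (Fin N) (Fin N) ℝ))⁻¹ * A)⁻¹‖ =
      Real.sqrt (lamN / lam1) ∧
    ‖(A + Real.sqrt (lam1 * lamN) • (1 : Matrix (Fin N) (Fin N) ℝ))⁻¹ * A‖ *
        ‖((A + Real.sqrt (lam1 * lamN) • (1 : Matrix (Fin N) (Fin N) ℝ))⁻¹ * A)⁻¹‖ =
      ‖A + Real.sqrt (lam1 * lamN) • (1 : Matrix (Fin N) (Fin N) ℝ)‖ *
        ‖(A + Real.sqrt (lam1 * lamN) • (1 : Matrix (Fin N) (Fin N) ℝ))⁻¹‖ := by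
  rw [← hA.spectrum_real_eq_range_eigenvalues] at hmin hmax
  have hlamN : 0 < lamN := hpd.trans_le (hmin.2 hmax.1)
  have hc : 0 ≤ √(lam1 * lamN) := Real.sqrt_nonneg _
  change l2Cond _ = _ ∧ l2Cond _ = l2Cond _
  rw [hA.l2Cond_inv_add_smul_one_mul hmin hmax hpd hc, hA.l2Cond_add_smul_one hmin hmax hpd hc,
    Real.div_add_sqrt_mul_mul_add_sqrt_mul_div hpd hlamN,
    Real.add_sqrt_mul_div_add_sqrt_mul hpd hlamN]
  exact ⟨rfl, rfl⟩
end

section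
/- Let the Arnoldi relation A V_m = V_m H_m + h_{m+1,m} v_{m+1} e_m^T hold with V_m having orthonormal columns, v_{m+1} a unit vector orthogonal to the columns of V_m, and H_m upper Hessenberg with positive subdiagonal entries h_{i+1,i}. Let q_m(z) = det(zI − H_m) be the characteristic polynomial of H_m. Then ‖q_m(A) v₁‖ = ∏_{i=1}^m h_{i+1,i}. -/
open Matrix

/-!
The Arnoldi relation reads `A (V x) = V (H x) + h x_m v₊`. As `H` is upper Hessenberg, `H^k e₁`
vanishes below row `k + 1`, so `A^k v₁ = V H^k e₁` for `k < m`, while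
`A^m v₁ = V H^m e₁ + h (H^{m-1})_{m,1} v₊` with `(H^{m-1})_{m,1} = ∏_{i<m} h_{i+1,i}`.
For the monic polynomial `q_m` of degree `m`, Cayley–Hamilton `q_m(H) = 0` then leaves
`q_m(A) v₁ = (∏_{i≤m} h_{i+1,i}) v₊`.
-/

def Matrix.IsUpperHessenberg {R : Type*} [Zero R] {m : ℕ} (H : Matrix (Fin m) (Fin m) R) : Prop :=
  ∀ i j : Fin m, (j : ℕ) + 1 < i → H i j = 0

namespace Matrix.IsUpperHessenberg

variable {R : Type*} [CommSemiring R] {n : ℕ} {H : Matrix (Fin (n + 1)) (Fin (n + 1)) R}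

theorem pow_apply_zero_eq_zero (hH : H.IsUpperHessenberg) (k : ℕ) (i : Fin (n + 1))
    (hki : k < i) : (H ^ k) i 0 = 0 := by
  induction k generalizing i with
  | zero => exact one_apply_ne fun e => by simp [e] at hki
  | succ k ih =>
    rw [pow_succ', mul_apply]
    refine Finset.sum_eq_zero fun j _ => ?_
    by_cases hj : (j : ℕ) + 1 < i
    · rw [hH i j hj, zero_mul]
    · rw [ih j (by omega), mul_zero]

theorem pow_apply_zero_eq_prod (hH : H.IsUpperHessenberg) (k : ℕ) (hk : k ≤ n) :
    (H ^ k) ⟨k, by omega⟩ 0 = ∏ i : Fin k, H ⟨i + 1, by omega⟩ ⟨i, by omega⟩ := by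
  induction k with
  | zero => simp
  | succ k ih =>
    rw [pow_succ', mul_apply, Finset.sum_eq_single ⟨k, by omega⟩, ih (by omega),
      Fin.prod_univ_castSucc, mul_comm]
    · rfl
    · intro j _ hjk
      by_cases hj : (j : ℕ) + 1 < k + 1
      · rw [hH _ j hj, zero_mul]
      · have hjk' : (j : ℕ) ≠ k := fun e => hjk (Fin.ext e)
        rw [hH.pow_apply_zero_eq_zero k j (by omega), mul_zero]
    · simp

end Matrix.IsUpperHessenberg

section Arnoldi

variable {ι R : Type*} [Fintype ι] [CommRing R] {n : ℕ} {A : Matrix ι ι R}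
  {V : Matrix ι (Fin (n + 1)) R} {H : Matrix (Fin (n + 1)) (Fin (n + 1)) R} {w : ι → R} {h : R}

theorem mulVec_mulVec_of_arnoldi
    (hA : A * V = V * H + h • vecMulVec w (Pi.single (Fin.last n) 1)) (x : Fin (n + 1) → R) :
    A *ᵥ (V *ᵥ x) = V *ᵥ (H *ᵥ x) + (h * x (Fin.last n)) • w := by
  rw [mulVec_mulVec, hA, add_mulVec, ← mulVec_mulVec, smul_mulVec, vecMulVec_mulVec,
    single_one_dotProduct, op_smul_eq_smul, smul_smul]

variable [DecidableEq ι]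

local notation "e₀" => (Pi.single 0 1 : Fin (n + 1) → R)

theorem pow_mulVec_of_arnoldi
    (hA : A * V = V * H + h • vecMulVec w (Pi.single (Fin.last n) 1))
    (hH : H.IsUpperHessenberg) {k : ℕ} (hk : k ≤ n) :
    (A ^ k) *ᵥ (V *ᵥ e₀) = V *ᵥ ((H ^ k) *ᵥ e₀) := by
  induction k with
  | zero => simp only [pow_zero, one_mulVec]
  | succ k ih =>
    have hlast : ((H ^ k) *ᵥ e₀) (Fin.last n) = 0 :=
      (congrFun (mulVec_single_one _ _) _).trans
        (hH.pow_apply_zero_eq_zero k _ (by simp; omega))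
    rw [pow_succ', ← mulVec_mulVec, ih (by omega), mulVec_mulVec_of_arnoldi hA, hlast,
      mul_zero, zero_smul, add_zero, mulVec_mulVec _ H, ← pow_succ']

theorem pow_succ_mulVec_of_arnoldi
    (hA : A * V = V * H + h • vecMulVec w (Pi.single (Fin.last n) 1))
    (hH : H.IsUpperHessenberg) :
    (A ^ (n + 1)) *ᵥ (V *ᵥ e₀) = V *ᵥ ((H ^ (n + 1)) *ᵥ e₀) + (h * (H ^ n) (Fin.last n) 0) • w := by
  rw [pow_succ', ← mulVec_mulVec, pow_mulVec_of_arnoldi hA hH le_rfl,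
    mulVec_mulVec_of_arnoldi hA, mulVec_mulVec _ H, ← pow_succ',
    congrFun (mulVec_single_one (H ^ n) 0) (Fin.last n)]
  rfl

theorem aeval_mulVec_of_arnoldi
    (hA : A * V = V * H + h • vecMulVec w (Pi.single (Fin.last n) 1))
    (hH : H.IsUpperHessenberg) (p : Polynomial R) (hp : p.natDegree ≤ n + 1) :
    Polynomial.aeval A p *ᵥ (V *ᵥ e₀) =
      V *ᵥ (Polynomial.aeval H p *ᵥ e₀) + (p.coeff (n + 1) * (h * (H ^ n) (Fin.last n) 0)) • w := by
  have hlt : p.natDegree < n + 2 := by omega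
  have hlow : ∀ i ∈ Finset.range (n + 1),
      (p.coeff i • A ^ i) *ᵥ (V *ᵥ e₀) = V *ᵥ ((p.coeff i • H ^ i) *ᵥ e₀) := fun i hi => by
    rw [smul_mulVec, smul_mulVec, mulVec_smul,
      pow_mulVec_of_arnoldi hA hH (Nat.lt_succ_iff.mp (Finset.mem_range.mp hi))]
  rw [Polynomial.aeval_eq_sum_range' hlt, Polynomial.aeval_eq_sum_range' hlt, sum_mulVec,
    sum_mulVec, mulVec_sum, Finset.sum_range_succ, Finset.sum_range_succ (n := n + 1),
    Finset.sum_congr rfl hlow, smul_mulVec, smul_mulVec, pow_succ_mulVec_of_arnoldi hA hH,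
    smul_add, smul_smul, mulVec_smul, add_assoc]

theorem charpoly_mulVec_of_arnoldi [Nontrivial R]
    (hA : A * V = V * H + h • vecMulVec w (Pi.single (Fin.last n) 1))
    (hH : H.IsUpperHessenberg) :
    Polynomial.aeval A H.charpoly *ᵥ (V *ᵥ e₀) = ((∏ i : Fin n, H i.succ i.castSucc) * h) • w := by
  have hdeg : H.charpoly.natDegree = n + 1 := by simp [charpoly_natDegree_eq_dim]
  have hlead : H.charpoly.coeff (n + 1) = 1 := by
    simpa [hdeg] using H.charpoly_monic.coeff_natDegree
  have hprod : (H ^ n) (Fin.last n) 0 = ∏ i : Fin n, H i.succ i.castSucc :=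
    hH.pow_apply_zero_eq_prod n le_rfl
  rw [aeval_mulVec_of_arnoldi hA hH _ hdeg.le, aeval_self_charpoly, zero_mulVec, mulVec_zero,
    zero_add, hlead, one_mul, hprod, mul_comm]

end Arnoldi

theorem EuclideanSpace.norm_toLp_eq_sqrt_dotProduct {ι : Type*} [Fintype ι] (w : ι → ℝ) :
    ‖WithLp.toLp 2 w‖ = √(w ⬝ᵥ w) := by
  rw [norm_eq_sqrt_real_inner]
  rfl

theorem stmt8_general {N n : ℕ} (A : Matrix (Fin N) (Fin N) ℝ)
    (V : Matrix (Fin N) (Fin (n + 1)) ℝ) (Hm : Matrix (Fin (n + 1)) (Fin (n + 1)) ℝ)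
    (vnext : Fin N → ℝ) (h : ℝ)
    (hvnorm : vnext ⬝ᵥ vnext = 1)
    (hHess : ∀ i j : Fin (n + 1), (j : ℕ) + 1 < (i : ℕ) → Hm i j = 0)
    (hsub : ∀ i : Fin n, 0 < Hm i.succ i.castSucc) (hpos : 0 < h)
    (harnoldi : A * V = V * Hm + h • Matrix.vecMulVec vnext (Pi.single (Fin.last n) 1)) :
    ‖(WithLp.equiv 2 (Fin N → ℝ)).symm
        ((Polynomial.aeval A Hm.charpoly).mulVec (fun i => V i 0))‖ =
      (∏ i : Fin n, Hm i.succ i.castSucc) * h := by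
  have hv₁ : (fun i => V i 0) = V *ᵥ Pi.single 0 1 := (mulVec_single_one V 0).symm
  have hc : 0 ≤ (∏ i : Fin n, Hm i.succ i.castSucc) * h :=
    mul_nonneg (Finset.prod_nonneg fun i _ => (hsub i).le) hpos.le
  rw [hv₁, charpoly_mulVec_of_arnoldi harnoldi hHess, WithLp.equiv_symm_apply, WithLp.toLp_smul,
    norm_smul, EuclideanSpace.norm_toLp_eq_sqrt_dotProduct, hvnorm, Real.sqrt_one, mul_one,
    Real.norm_of_nonneg hc]

/-- under the Arnoldi relation `A V = V H + h v₊ e_mᵀ` (with `V`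
having orthonormal columns, `v₊` a unit vector orthogonal to them, `H` upper
Hessenberg with positive subdiagonal entries), the characteristic polynomial
`q_m` of `H` satisfies `‖q_m(A) v₁‖ = ∏_{i=1}^m h_{i+1,i}` (the product including
the scalar `h = h_{m+1,m}`). -/
theorem stmt8 {N n : ℕ} (A : Matrix (Fin N) (Fin N) ℝ)
    (V : Matrix (Fin N) (Fin (n + 1)) ℝ) (Hm : Matrix (Fin (n + 1)) (Fin (n + 1)) ℝ)
    (vnext : Fin N → ℝ) (h : ℝ)
    (horth : Vᵀ * V = 1)
    (hvnorm : vnext ⬝ᵥ vnext = 1)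
    (hvorth : Vᵀ.mulVec vnext = 0)
    (hHess : ∀ i j : Fin (n + 1), (j : ℕ) + 1 < (i : ℕ) → Hm i j = 0)
    (hsub : ∀ i : Fin n, 0 < Hm i.succ i.castSucc) (hpos : 0 < h)
    (harnoldi : A * V = V * Hm + h • Matrix.vecMulVec vnext (Pi.single (Fin.last n) 1)) :
    ‖(WithLp.equiv 2 (Fin N → ℝ)).symm
        ((Polynomial.aeval A Hm.charpoly).mulVec (fun i => V i 0))‖ =
      (∏ i : Fin n, Hm i.succ i.castSucc) * h :=
  stmt8_general A V Hm vnext h hvnorm hHess hsub hpos harnoldi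
end

section
/- Under the Arnoldi relation A V_m = V_m H_m + h_{m+1,m} v_{m+1} e_m^T with V_m^T V_m = I and v₁ the first column of V_m, for every monic polynomial s_m of exact degree m one has ∏_{i=1}^m h_{i+1,i} ≤ ‖s_m(A) v₁‖. -/
/-!
For an upper Hessenberg `H`, the vector `H^k e₁` vanishes below position `k + 1`, and its
`(k + 1)`-st entry is `h₂₁ ⋯ h_{k+1,k}`. Feeding this into the Arnoldi relation one power
of `A` at a time gives `A^k v₁ = V H^k e₁` for `k < m`, while the last step picks up the
residual term: `A^m v₁ = V H^m e₁ + (∏_{i=1}^m h_{i+1,i}) v_{m+1}`. Hence for monic `s`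
of degree `m`, `s(A) v₁ = V s(H) e₁ + (∏_{i=1}^m h_{i+1,i}) v_{m+1}`, and as `v_{m+1}` is
a unit vector orthogonal to the range of `V`, the product is
`⟪v_{m+1}, s(A) v₁⟫ ≤ ‖s(A) v₁‖`.
-/

open Matrix Polynomial

namespace Matrix

def IsUpperHessenberg_s9 {R : Type*} [Zero R] {n : ℕ} (H : Matrix (Fin n) (Fin n) R) : Prop :=
  ∀ i j : Fin n, (j : ℕ) + 1 < i → H i j = 0

namespace IsUpperHessenberg_s9

variable {R : Type*} [CommSemiring R] {n : ℕ} {H : Matrix (Fin (n + 1)) (Fin (n + 1)) R}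

theorem pow_mulVec_single_zero_eq_zero (hH : H.IsUpperHessenberg_s9) {k : ℕ} {i : Fin (n + 1)}
    (hki : k < i) : (H ^ k *ᵥ Pi.single 0 1) i = 0 := by
  induction k generalizing i with
  | zero =>
    rw [pow_zero, one_mulVec]
    exact Pi.single_eq_of_ne (by rintro rfl; simp at hki) 1
  | succ k ih =>
    rw [pow_succ', ← mulVec_mulVec]
    refine Finset.sum_eq_zero (fun j _ => ?_ : ∀ j ∈ Finset.univ, H i j * (H ^ k *ᵥ _) j = 0)
    rcases lt_or_ge k j with hkj | hjk
    · rw [ih hkj, mul_zero]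
    · rw [hH i j (by omega), zero_mul]

theorem pow_mulVec_single_zero_apply_self (hH : H.IsUpperHessenberg_s9) {k : ℕ} (hk : k ≤ n) :
    (H ^ k *ᵥ Pi.single 0 1) ⟨k, by omega⟩ =
      ∏ i : Fin k, H ⟨i + 1, by omega⟩ ⟨i, by omega⟩ := by
  induction k with
  | zero => simp
  | succ k ih =>
    rw [pow_succ', ← mulVec_mulVec, Fin.prod_univ_castSucc]
    simp only [Fin.val_castSucc, Fin.val_last]
    rw [← ih (by omega), mul_comm]
    refine Finset.sum_eq_single (f := fun j => H ⟨k + 1, by omega⟩ j * (H ^ k *ᵥ _) j)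
      ⟨k, by omega⟩ (fun j _ hjk => ?_) (fun h => absurd (Finset.mem_univ _) h)
    rcases lt_or_gt_of_ne (Fin.val_ne_of_ne hjk) with hjk | hkj
    · rw [hH _ j (Nat.succ_lt_succ hjk), zero_mul]
    · rw [hH.pow_mulVec_single_zero_eq_zero hkj, mul_zero]

end IsUpperHessenberg_s9

end Matrix

theorem mulVec_mulVec_of_mul_eq_add_smul_vecMulVec {R m k : Type*} [CommSemiring R] [Fintype m]
    [Fintype k] [DecidableEq k] {A : Matrix m m R} {V : Matrix m k R} {H : Matrix k k R}
    {f : m → R} {h : R} {j : k} (hAV : A * V = V * H + h • vecMulVec f (Pi.single j 1))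
    (x : k → R) : A *ᵥ (V *ᵥ x) = V *ᵥ (H *ᵥ x) + (h * x j) • f := by
  rw [mulVec_mulVec, hAV, add_mulVec, ← mulVec_mulVec, smul_mulVec, vecMulVec_mulVec,
    single_one_dotProduct, op_smul_eq_smul, smul_smul]

section Arnoldi

variable {R m : Type*} [CommSemiring R] [Fintype m] [DecidableEq m] {n : ℕ} {A : Matrix m m R}
  {V : Matrix m (Fin (n + 1)) R} {H : Matrix (Fin (n + 1)) (Fin (n + 1)) R} {f : m → R} {h : R}

theorem arnoldi_pow_mulVec (hH : H.IsUpperHessenberg_s9)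
    (hAV : A * V = V * H + h • vecMulVec f (Pi.single (Fin.last n) 1)) {k : ℕ} (hk : k ≤ n) :
    A ^ k *ᵥ (V *ᵥ Pi.single 0 1) = V *ᵥ (H ^ k *ᵥ Pi.single 0 1) := by
  induction k with
  | zero => rw [pow_zero, pow_zero, one_mulVec, one_mulVec]
  | succ k ih =>
    have hlast : (H ^ k *ᵥ Pi.single 0 1) (Fin.last n) = 0 :=
      hH.pow_mulVec_single_zero_eq_zero (by rw [Fin.val_last]; omega)
    rw [pow_succ', ← mulVec_mulVec, ih (by omega),
      mulVec_mulVec_of_mul_eq_add_smul_vecMulVec hAV, hlast, mul_zero, zero_smul, add_zero,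
      pow_succ' H, ← mulVec_mulVec]

theorem arnoldi_pow_succ_mulVec (hH : H.IsUpperHessenberg_s9)
    (hAV : A * V = V * H + h • vecMulVec f (Pi.single (Fin.last n) 1)) :
    A ^ (n + 1) *ᵥ (V *ᵥ Pi.single 0 1) =
      V *ᵥ (H ^ (n + 1) *ᵥ Pi.single 0 1) + (h * ∏ i : Fin n, H i.succ i.castSucc) • f := by
  rw [pow_succ', ← mulVec_mulVec, arnoldi_pow_mulVec hH hAV le_rfl,
    mulVec_mulVec_of_mul_eq_add_smul_vecMulVec hAV, pow_succ' H, ← mulVec_mulVec]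
  congr 3
  exact hH.pow_mulVec_single_zero_apply_self le_rfl

theorem arnoldi_aeval_mulVec (hH : H.IsUpperHessenberg_s9)
    (hAV : A * V = V * H + h • vecMulVec f (Pi.single (Fin.last n) 1)) {p : R[X]}
    (hp : p.natDegree ≤ n) :
    aeval A p *ᵥ (V *ᵥ Pi.single 0 1) = V *ᵥ (aeval H p *ᵥ Pi.single 0 1) := by
  rw [aeval_eq_sum_range' (Nat.lt_succ_of_le hp), aeval_eq_sum_range' (Nat.lt_succ_of_le hp),
    sum_mulVec, sum_mulVec, mulVec_sum]
  refine Finset.sum_congr rfl fun k hk => ?_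
  rw [smul_mulVec, smul_mulVec, mulVec_smul,
    arnoldi_pow_mulVec hH hAV (Nat.lt_succ_iff.mp (Finset.mem_range.mp hk))]

theorem arnoldi_aeval_mulVec_of_monic (hH : H.IsUpperHessenberg_s9)
    (hAV : A * V = V * H + h • vecMulVec f (Pi.single (Fin.last n) 1)) {s : R[X]}
    (hs : s.Monic) (hdeg : s.natDegree = n + 1) :
    aeval A s *ᵥ (V *ᵥ Pi.single 0 1) =
      V *ᵥ (aeval H s *ᵥ Pi.single 0 1) + (h * ∏ i : Fin n, H i.succ i.castSucc) • f := by
  have hlow : s.eraseLead.natDegree ≤ n := (eraseLead_natDegree_le s).trans (by omega)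
  rw [← s.eraseLead_add_C_mul_X_pow, hs.leadingCoeff, hdeg, C_1, one_mul]
  simp only [map_add, map_pow, aeval_X, add_mulVec, mulVec_add, arnoldi_aeval_mulVec hH hAV hlow,
    arnoldi_pow_succ_mulVec hH hAV]
  abel

end Arnoldi

theorem abs_le_norm_mulVec_add_smul {m k : Type*} [Fintype m] [Fintype k] {V : Matrix m k ℝ}
    {f : m → ℝ} (hf : f ⬝ᵥ f = 1) (hVf : Vᵀ *ᵥ f = 0) (u : k → ℝ) (c : ℝ) :
    |c| ≤ ‖WithLp.toLp 2 (V *ᵥ u + c • f)‖ := by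
  have hinner : inner ℝ (WithLp.toLp 2 f) (WithLp.toLp 2 (V *ᵥ u + c • f)) = c := by
    rw [EuclideanSpace.inner_eq_star_dotProduct, star_trivial, add_dotProduct, smul_dotProduct,
      hf, dotProduct_comm, dotProduct_mulVec, ← mulVec_transpose, hVf, zero_dotProduct,
      smul_eq_mul, mul_one, zero_add]
  have hnorm : ‖WithLp.toLp 2 f‖ = 1 := by
    rw [← pow_eq_one_iff_of_nonneg (norm_nonneg _) two_ne_zero, ← real_inner_self_eq_norm_sq,
      EuclideanSpace.inner_eq_star_dotProduct, star_trivial, hf]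
  simpa only [hinner, hnorm, one_mul] using
    abs_real_inner_le_norm (WithLp.toLp 2 f) (WithLp.toLp 2 (V *ᵥ u + c • f))

theorem stmt9_general {N n : ℕ} (A : Matrix (Fin N) (Fin N) ℝ)
    (V : Matrix (Fin N) (Fin (n + 1)) ℝ) (Hm : Matrix (Fin (n + 1)) (Fin (n + 1)) ℝ)
    (vnext : Fin N → ℝ) (h : ℝ)
    (hvnorm : vnext ⬝ᵥ vnext = 1)
    (hvorth : Vᵀ.mulVec vnext = 0)
    (hHess : ∀ i j : Fin (n + 1), (j : ℕ) + 1 < (i : ℕ) → Hm i j = 0)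
    (harnoldi : A * V = V * Hm + h • Matrix.vecMulVec vnext (Pi.single (Fin.last n) 1))
    (s : Polynomial ℝ) (hmonic : s.Monic) (hdeg : s.natDegree = n + 1) :
    (∏ i : Fin n, Hm i.succ i.castSucc) * h ≤
      ‖(WithLp.equiv 2 (Fin N → ℝ)).symm
        ((Polynomial.aeval A s).mulVec (fun i => V i 0))‖ := by
  have hv₁ : (fun i => V i 0) = V *ᵥ Pi.single 0 1 := (mulVec_single_one V 0).symm
  rw [hv₁, arnoldi_aeval_mulVec_of_monic hHess harnoldi hmonic hdeg, mul_comm]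
  exact (le_abs_self _).trans (abs_le_norm_mulVec_add_smul hvnorm hvorth _ _)

/-- under the Arnoldi relation, for every monic polynomial `s` of exact
degree `m` one has `∏_{i=1}^m h_{i+1,i} ≤ ‖s(A) v₁‖`. -/
theorem stmt9 {N n : ℕ} (A : Matrix (Fin N) (Fin N) ℝ)
    (V : Matrix (Fin N) (Fin (n + 1)) ℝ) (Hm : Matrix (Fin (n + 1)) (Fin (n + 1)) ℝ)
    (vnext : Fin N → ℝ) (h : ℝ)
    (horth : Vᵀ * V = 1)
    (hvnorm : vnext ⬝ᵥ vnext = 1)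
    (hvorth : Vᵀ.mulVec vnext = 0)
    (hHess : ∀ i j : Fin (n + 1), (j : ℕ) + 1 < (i : ℕ) → Hm i j = 0)
    (hsub : ∀ i : Fin n, 0 < Hm i.succ i.castSucc) (hpos : 0 < h)
    (harnoldi : A * V = V * Hm + h • Matrix.vecMulVec vnext (Pi.single (Fin.last n) 1))
    (s : Polynomial ℝ) (hmonic : s.Monic) (hdeg : s.natDegree = n + 1) :
    (∏ i : Fin n, Hm i.succ i.castSucc) * h ≤
      ‖(WithLp.equiv 2 (Fin N → ℝ)).symm
        ((Polynomial.aeval A s).mulVec (fun i => V i 0))‖ :=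
  stmt9_general A V Hm vnext h hvnorm hvorth hHess harnoldi s hmonic hdeg
end
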